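/- arXiv:1806.08547 — 2 statements merged into one kernel-verified Lean document; each statement's English description precedes it below -/
import Mathlib

section
/- For the OneMax problem under a dynamic uniform constraint with cardinality bound changing from B to B*, the MOEA-S algorithm, which uses single-bit flips and a dominance relation keeping at most two solutions in the population, starting from a solution that is optimal for bound B, has expected re-optimization time O(n log((n−B)/(n−B*))) if B < B*, and O(n log(B/B*)) if B > B*. -/
open scoped ENNReal
open Classical

noncomputable section

/-- Probability that the Markov chain with transition kernel `K`, started at `x`,
has not visited the target set `A` during the time steps `0, 1, …, t`. -/
def survive {S : Type*} (K : S → S → ℝ≥0∞) (A : S → Prop) : ℕ → S → ℝ≥0∞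
  | 0, x => if A x then 0 else 1
  | t + 1, x => if A x then 0 else ∑' y, K x y * survive K A t y

/-- Expected hitting time of the set `A` for the Markov chain with kernel `K` started at `x`,
computed as `∑_{t ≥ 0} Pr(T > t)`. -/
def hitTime {S : Type*} (K : S → S → ℝ≥0∞) (A : S → Prop) (x : S) : ℝ≥0∞ :=
  ∑' t, survive K A t x

/-- One step of a (1+1)-type algorithm: an offspring `z` is sampled from the mutation
distribution `pm x ·`; it replaces `x` iff `accept x z` holds. -/
def eaKernel {S : Type*} (pm : S → S → ℝ≥0∞) (accept : S → S → Prop) (x y : S) : ℝ≥0∞ :=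
  ∑' z, if (if accept x z then z else x) = y then pm x z else 0

/-- The number of one-bits of a bit string. -/
def ones {n : ℕ} (x : Fin n → Bool) : ℕ := (Finset.univ.filter fun i => x i = true).card

/-- Standard bit mutation: each of the `n` bits is flipped independently with probability `1/n`. -/
def pmutEA (n : ℕ) (x y : Fin n → Bool) : ℝ≥0∞ :=
  ((n : ℝ≥0∞)⁻¹) ^ hammingDist x y * (1 - (n : ℝ≥0∞)⁻¹) ^ (n - hammingDist x y)

/-- RLS mutation: exactly one bit, chosen uniformly at random, is flipped. -/
def pmutRLS (n : ℕ) (x y : Fin n → Bool) : ℝ≥0∞ :=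
  if hammingDist x y = 1 then (n : ℝ≥0∞)⁻¹ else 0


/-- `w` lies in the special bracket `{B*, s}` (where `s = B*−1` if the bound increases and
`s = B*+1` if it decreases). -/
def inBracket (Bs s w : ℕ) : Prop := w = Bs ∨ w = s

/-- The MOEA-S dominance relation (for `incr = true`, i.e. `B ≤ B*`; for `incr = false` the
comparison of the numbers of ones is reversed). -/
def domS {n : ℕ} (f : (Fin n → Bool) → ℝ) (Bs s : ℕ) (incr : Bool)
    (y z : Fin n → Bool) : Prop :=
  (¬(inBracket Bs s (ones y) ∧ inBracket Bs s (ones z)) ∧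
      ((if incr then ones z < ones y else ones y < ones z) ∨
        (ones y = ones z ∧ f z ≤ f y))) ∨
    (inBracket Bs s (ones y) ∧ inBracket Bs s (ones z) ∧ ones y = ones z ∧ f z ≤ f y)

/-- `y` and `z` are incomparable iff one of them has `B*` ones and the other `s` ones. -/
def incompS {n : ℕ} (Bs s : ℕ) (y z : Fin n → Bool) : Prop :=
  (ones y = Bs ∧ ones z = s) ∨ (ones y = s ∧ ones z = Bs)

/-- The MOEA-S population update: if the offspring `y` is incomparable with every member of `P`
it is added to the population; otherwise, if its number of ones lies between the bounds and it
dominates some member, it replaces the dominated member(s). -/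
def moeasUpdate {n : ℕ} (f : (Fin n → Bool) → ℝ) (Bs s : ℕ) (incr : Bool) (lo hi : ℕ)
    (P : Finset (Fin n → Bool)) (y : Fin n → Bool) : Finset (Fin n → Bool) :=
  if ∀ z ∈ P, incompS Bs s y z then insert y P
  else if (lo ≤ ones y ∧ ones y ≤ hi) ∧ ∃ z ∈ P, domS f Bs s incr y z then
    insert y (P.filter fun z => ¬domS f Bs s incr y z)
  else P

/-- One iteration of MOEA-S: a parent is chosen uniformly at random from the population, an
offspring is created by flipping a single uniformly random bit, and the population is updated. -/
def moeasKernel (n : ℕ) (f : (Fin n → Bool) → ℝ) (Bs s : ℕ) (incr : Bool) (lo hi : ℕ)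
    (P Q : Finset (Fin n → Bool)) : ℝ≥0∞ :=
  (P.card : ℝ≥0∞)⁻¹ *
    ∑ x ∈ P, ∑' y, if moeasUpdate f Bs s incr lo hi P y = Q then pmutRLS n x y else 0

/-!
Started from a single solution, MOEA-S keeps a one-element population `{x}` until a solution
with `B*` ones appears: a flip that moves `|x|₁` towards `B*` dominates `x` and replaces it, a
flip that moves it away is dominated and discarded, and the incomparable pair of the bracket
only forms in the very last step. Counting the bits whose flip is an improvement (the zeros
if `B < B*`, the ones if `B > B*`), the population thus performs a coupon-collector descent:
with `j` improving bits left a step succeeds with probability `j / n`, so the expected time is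
`∑ n / j` over the levels `j` to be crossed, which is at most `n` times a logarithm. The
expected hitting time is bounded through a drift function that takes exactly these values on
singleton populations.
-/

section HittingTime

variable {S : Type*} (K : S → S → ℝ≥0∞) (A : S → Prop)

lemma survive_of_mem {x : S} (hx : A x) : ∀ t, survive K A t x = 0
  | 0 => by simp [survive, hx]
  | t + 1 => by simp [survive, hx]

lemma sum_range_survive_le (h : S → ℝ≥0∞) (hh : ∀ x, ¬A x → 1 + ∑' y, K x y * h y ≤ h x) :
    ∀ t x, ∑ s ∈ Finset.range t, survive K A s x ≤ h x
  | 0, x => by simp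
  | t + 1, x => by
    by_cases hx : A x
    · simp [survive_of_mem K A hx]
    calc ∑ s ∈ Finset.range (t + 1), survive K A s x
        = 1 + ∑' y, K x y * ∑ s ∈ Finset.range t, survive K A s y := by
          simp only [Finset.sum_range_succ', survive, if_neg hx, Finset.mul_sum]
          rw [Summable.tsum_finsetSum fun _ _ => ENNReal.summable, add_comm]
      _ ≤ 1 + ∑' y, K x y * h y := by
          gcongr with y
          exact sum_range_survive_le h hh t y
      _ ≤ h x := hh x hx

theorem hitTime_le_of_drift (h : S → ℝ≥0∞) (hh : ∀ x, ¬A x → 1 + ∑' y, K x y * h y ≤ h x)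
    (x : S) : hitTime K A x ≤ h x :=
  ENNReal.tsum_le_of_sum_range_le fun t => sum_range_survive_le K A h hh t x

end HittingTime

section CouponCollector

def couponCollectorTime (n a b : ℕ) : ℝ≥0∞ := ∑ j ∈ Finset.Ioc a b, (n : ℝ≥0∞) / j

lemma couponCollectorTime_self (n a : ℕ) : couponCollectorTime n a a = 0 := by
  simp [couponCollectorTime]

lemma couponCollectorTime_succ {n a b : ℕ} (hab : a ≤ b) :
    couponCollectorTime n a (b + 1) = n / (b + 1 : ℕ) + couponCollectorTime n a b := by
  rw [couponCollectorTime, couponCollectorTime, Finset.sum_Ioc_succ_top hab, add_comm]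

lemma sum_Ioc_inv_le_log_sub_log {a b : ℕ} (ha : 0 < a) (hab : a ≤ b) :
    ∑ j ∈ Finset.Ioc a b, (j : ℝ)⁻¹ ≤ Real.log b - Real.log a := by
  induction b, hab using Nat.le_induction with
  | base => simp
  | succ b hab ih =>
    have hb : (0 : ℝ) < b := by exact_mod_cast ha.trans_le hab
    -- `1 - 1/x ≤ log x` at `x = (b + 1) / b`
    have step : ((b : ℝ) + 1)⁻¹ ≤ Real.log (b + 1) - Real.log b := by
      have h := Real.one_sub_inv_le_log_of_pos (x := (b + 1 : ℝ) / b) (by positivity)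
      rw [Real.log_div (by positivity) hb.ne', inv_div] at h
      have hfrac : 1 - (b : ℝ) / (b + 1) = ((b : ℝ) + 1)⁻¹ := by
        field_simp
        ring
      linarith
    rw [Finset.sum_Ioc_succ_top hab]
    push_cast
    linarith

lemma couponCollectorTime_le_log {n a b : ℕ} (ha : 0 < a) (hab : a ≤ b) :
    couponCollectorTime n a b ≤ ENNReal.ofReal (n * Real.log (b / a)) := by
  have hterm : ∀ j ∈ Finset.Ioc a b, (n : ℝ≥0∞) / j = ENNReal.ofReal (n * (j : ℝ)⁻¹) := by
    intro j hj
    have hj : (0 : ℝ) < j := by exact_mod_cast ha.trans (Finset.mem_Ioc.mp hj).1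
    rw [ENNReal.ofReal_mul (Nat.cast_nonneg n), ENNReal.ofReal_inv_of_pos hj,
      ENNReal.ofReal_natCast, ENNReal.ofReal_natCast, div_eq_mul_inv]
  rw [couponCollectorTime, Finset.sum_congr rfl hterm,
    ← ENNReal.ofReal_sum_of_nonneg fun _ _ => by positivity, ← Finset.mul_sum]
  gcongr
  rw [Real.log_div (by exact_mod_cast (ha.trans_le hab).ne') (by exact_mod_cast ha.ne')]
  exact sum_Ioc_inv_le_log_sub_log ha hab

/-- `N / c` is the expected waiting time until one of `c` out of `N` equally likely outcomes
occurs, so `N / c + G` satisfies the drift condition with equality. -/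
lemma one_add_inv_mul_sum_ite_eq {ι : Type*} [Fintype ι] (p : ι → Prop) [DecidablePred p]
    (hp : (Finset.univ.filter p).card ≠ 0) (G : ℝ≥0∞) :
    1 + (Fintype.card ι : ℝ≥0∞)⁻¹ *
        ∑ i, (if p i then G else Fintype.card ι / (Finset.univ.filter p).card + G) =
      Fintype.card ι / (Finset.univ.filter p).card + G := by
  set N : ℕ := Fintype.card ι
  set c : ℕ := (Finset.univ.filter p).card
  set d : ℕ := (Finset.univ.filter fun i => ¬p i).card
  have hcd : (c : ℝ≥0∞) + d = N := by
    rw [← Nat.cast_add, Finset.card_filter_add_card_filter_not, Finset.card_univ]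
  have hc : (c : ℝ≥0∞) ≠ 0 := Nat.cast_ne_zero.mpr hp
  have hN : (N : ℝ≥0∞) ≠ 0 := by rw [← hcd]; simp [hc]
  have hN' : (N : ℝ≥0∞) ≠ ⊤ := ENNReal.natCast_ne_top N
  calc 1 + (N : ℝ≥0∞)⁻¹ * ∑ i, (if p i then G else N / c + G)
      = 1 + (N : ℝ≥0∞)⁻¹ * (N * (d / c + G)) := by
        rw [Finset.sum_ite, Finset.sum_const, Finset.sum_const, nsmul_eq_mul, nsmul_eq_mul]
        congr 2
        rw [← hcd, ENNReal.div_eq_inv_mul, ENNReal.div_eq_inv_mul]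
        ring
    _ = (c + d) / c + G := by
        rw [← mul_assoc, ENNReal.inv_mul_cancel hN hN', one_mul, ENNReal.add_div,
          ENNReal.div_self hc (ENNReal.natCast_ne_top c), add_assoc]
    _ = N / c + G := by rw [hcd]

end CouponCollector

section BitStrings

variable {n : ℕ} {x y : Fin n → Bool} {i : Fin n}

def flipBit (x : Fin n → Bool) (i : Fin n) : Fin n → Bool := Function.update x i (!x i)

@[simp]
lemma flipBit_self (x : Fin n → Bool) (i : Fin n) : flipBit x i i = !x i :=
  Function.update_self _ _ _

lemma flipBit_of_ne {j : Fin n} (h : j ≠ i) : flipBit x i j = x j :=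
  Function.update_of_ne h _ _

def bitCount (b : Bool) (x : Fin n → Bool) : ℕ := (Finset.univ.filter fun j => x j = b).card

lemma ones_le (x : Fin n → Bool) : ones x ≤ n :=
  (Finset.card_filter_le _ _).trans_eq (Finset.card_fin n)

lemma ones_eq_bitCount_true (x : Fin n → Bool) : ones x = bitCount true x := rfl

lemma bitCount_false (x : Fin n → Bool) : bitCount false x = n - ones x := by
  have h := Finset.card_filter_add_card_filter_not (s := Finset.univ) fun j => x j = true
  simp only [Bool.not_eq_true, Finset.card_univ, Fintype.card_fin] at h
  rw [bitCount, ones]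
  omega

lemma bitCount_flipBit_add_one {b : Bool} (h : x i = b) :
    bitCount b (flipBit x i) + 1 = bitCount b x := by
  have hset : (Finset.univ.filter fun j => flipBit x i j = b) =
      (Finset.univ.filter fun j => x j = b).erase i := by
    ext j
    by_cases hj : j = i
    · subst hj; simp [h]
    · simp [flipBit_of_ne hj, hj]
  rw [bitCount, bitCount, hset, Finset.card_erase_add_one (by simp [h])]

lemma bitCount_flipBit_of_ne {b : Bool} (h : x i ≠ b) :
    bitCount b (flipBit x i) = bitCount b x + 1 := by
  have hset : (Finset.univ.filter fun j => flipBit x i j = b) =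
      insert i (Finset.univ.filter fun j => x j = b) := by
    ext j
    by_cases hj : j = i
    · subst hj; cases b <;> simpa using h
    · simp [flipBit_of_ne hj, hj]
  rw [bitCount, bitCount, hset, Finset.card_insert_of_notMem (by simp [h])]

lemma hammingDist_eq_one_iff : hammingDist x y = 1 ↔ ∃ i, flipBit x i = y := by
  constructor
  · intro h
    obtain ⟨i, hi⟩ := Finset.card_eq_one.mp h
    have hdiff : ∀ j, x j ≠ y j ↔ j = i := fun j => by
      simpa using congrArg (j ∈ ·) hi
    refine ⟨i, funext fun j => ?_⟩
    by_cases hj : j = i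
    · subst hj
      have := (hdiff j).mpr rfl
      cases hx : x j <;> cases hy : y j <;> simp_all
    · rw [flipBit_of_ne hj]
      exact not_not.mp (mt (hdiff j).mp hj)
  · rintro ⟨i, rfl⟩
    rw [hammingDist, Finset.card_eq_one]
    refine ⟨i, Finset.ext fun j => ?_⟩
    by_cases hj : j = i
    · subst hj; simp
    · simp [flipBit_of_ne hj, hj]

lemma flipBit_injective (x : Fin n → Bool) : Function.Injective (flipBit x) := by
  intro i j hij
  by_contra hne
  simpa [flipBit_of_ne hne] using congrFun hij i

lemma sum_pmutRLS_mul (x : Fin n → Bool) (F : (Fin n → Bool) → ℝ≥0∞) :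
    ∑ y, pmutRLS n x y * F y = (n : ℝ≥0∞)⁻¹ * ∑ i, F (flipBit x i) := by
  have himage : (Finset.univ.filter fun y => hammingDist x y = 1) =
      Finset.univ.image (flipBit x) := by
    ext y
    simp [hammingDist_eq_one_iff]
  simp only [pmutRLS, ite_mul, zero_mul]
  rw [← Finset.sum_filter, himage, Finset.sum_image fun i _ j _ h => flipBit_injective x h,
    Finset.mul_sum]

end BitStrings

section MOEAS

variable {n : ℕ} (f : (Fin n → Bool) → ℝ) {Bs s : ℕ} {incr : Bool} {lo hi : ℕ}
  {x y : Fin n → Bool}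

lemma tsum_moeasKernel_singleton_mul (h : Finset (Fin n → Bool) → ℝ≥0∞) :
    ∑' Q, moeasKernel n f Bs s incr lo hi {x} Q * h Q =
      (n : ℝ≥0∞)⁻¹ * ∑ i, h (moeasUpdate f Bs s incr lo hi {x} (flipBit x i)) := by
  rw [← sum_pmutRLS_mul x fun y => h (moeasUpdate f Bs s incr lo hi {x} y), tsum_fintype]
  simp only [moeasKernel, Finset.card_singleton, Nat.cast_one, inv_one, one_mul,
    Finset.sum_singleton, tsum_fintype, Finset.sum_mul, ite_mul, zero_mul]
  rw [Finset.sum_comm]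
  exact Finset.sum_congr rfl fun y _ => by simp

lemma moeasUpdate_singleton_of_incompS (h : incompS Bs s y x) :
    moeasUpdate f Bs s incr lo hi {x} y = insert y {x} := by
  rw [moeasUpdate, if_pos (by simpa using h)]

lemma moeasUpdate_singleton_of_domS (hni : ¬incompS Bs s y x) (hd : domS f Bs s incr y x)
    (hlo : lo ≤ ones y) (hhi : ones y ≤ hi) :
    moeasUpdate f Bs s incr lo hi {x} y = {y} := by
  rw [moeasUpdate, if_neg (by simpa using hni), if_pos ⟨⟨hlo, hhi⟩, x, by simp, hd⟩,
    Finset.filter_singleton, if_neg (not_not_intro hd), insert_empty_eq]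

lemma moeasUpdate_singleton_of_not_domS (hni : ¬incompS Bs s y x)
    (hnd : ¬domS f Bs s incr y x) :
    moeasUpdate f Bs s incr lo hi {x} y = {x} := by
  rw [moeasUpdate, if_neg (by simpa using hni),
    if_neg fun ⟨_, z, hz, hd⟩ => hnd (Finset.mem_singleton.mp hz ▸ hd)]

lemma domS_of_better (hx : ¬inBracket Bs s (ones x))
    (h : if incr then ones x < ones y else ones y < ones x) : domS f Bs s incr y x :=
  Or.inl ⟨fun hb => hx hb.2, Or.inl h⟩

lemma not_domS_of_worse (h : if incr then ones y < ones x else ones x < ones y) :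
    ¬domS f Bs s incr y x := by
  cases incr <;> simp only [Bool.false_eq_true, if_false, if_true] at h <;>
    simp only [domS, Bool.false_eq_true, if_false, if_true] <;> omega

end MOEAS

section FitnessLevels

variable {n : ℕ} (f : (Fin n → Bool) → ℝ) {Bs s : ℕ} {incr : Bool} {lo hi : ℕ}

theorem hitTime_moeasKernel_le_couponCollectorTime {b : Bool} {a : ℕ}
    (good : (Fin n → Bool) → Prop) (hgood : ∀ x, good x → a < bitCount b x ∧ ones x ≠ Bs)
    (hstay : ∀ x i, good x → x i ≠ b → moeasUpdate f Bs s incr lo hi {x} (flipBit x i) = {x})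
    (hfinish : ∀ x i, good x → x i = b → bitCount b x = a + 1 →
      ∃ z ∈ moeasUpdate f Bs s incr lo hi {x} (flipBit x i), ones z = Bs)
    (hadvance : ∀ x i, good x → x i = b → a + 1 < bitCount b x →
      moeasUpdate f Bs s incr lo hi {x} (flipBit x i) = {flipBit x i} ∧ good (flipBit x i))
    {x₀ : Fin n → Bool} (hx₀ : good x₀) :
    hitTime (moeasKernel n f Bs s incr lo hi) (fun P => ∃ x ∈ P, ones x = Bs) {x₀} ≤
      couponCollectorTime n a (bitCount b x₀) := by
  -- on a singleton the sum is the value at its element, which saves choosing that element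
  set Φ : Finset (Fin n → Bool) → ℝ≥0∞ := fun P =>
    if ∃ x ∈ P, ones x = Bs then 0
    else if ∃ x, P = {x} ∧ good x then ∑ x ∈ P, couponCollectorTime n a (bitCount b x)
    else ⊤
  have hΦ : ∀ x, good x → Φ {x} = couponCollectorTime n a (bitCount b x) := fun x hx => by
    simp [Φ, (hgood x hx).2, hx]
  have hstep : ∀ x, good x → ∀ i, Φ (moeasUpdate f Bs s incr lo hi {x} (flipBit x i)) =
      if x i = b then couponCollectorTime n a (bitCount b x - 1)
      else couponCollectorTime n a (bitCount b x) := by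
    intro x hx i
    split_ifs with hxi
    · have hcount := bitCount_flipBit_add_one hxi
      rcases Nat.lt_or_eq_of_le (hgood x hx).1 with hmore | hlast
      · obtain ⟨hupd, hgood'⟩ := hadvance x i hx hxi hmore
        rw [hupd, hΦ _ hgood']
        congr 1
        omega
      · rw [← hlast, Nat.succ_sub_one, couponCollectorTime_self]
        exact if_pos (hfinish x i hx hxi hlast.symm)
    · rw [hstay x i hx hxi, hΦ x hx]
  refine (hitTime_le_of_drift _ _ Φ (fun P hP => ?_) {x₀}).trans (hΦ x₀ hx₀).le
  by_cases hP' : ∃ x, P = {x} ∧ good x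
  swap
  · simp [Φ, hP, hP']
  obtain ⟨x, rfl, hx⟩ := hP'
  obtain ⟨c, hc⟩ : ∃ c, bitCount b x = c + 1 :=
    Nat.exists_eq_add_one.mpr (hgood x hx).1.bot_lt
  have hac : a ≤ c := by have := (hgood x hx).1; omega
  have hcard : (Finset.univ.filter fun i => x i = b).card = c + 1 := hc
  rw [tsum_moeasKernel_singleton_mul, Finset.sum_congr rfl fun i _ => hstep x hx i, hΦ x hx,
    hc, Nat.add_sub_cancel, couponCollectorTime_succ hac]
  have := one_add_inv_mul_sum_ite_eq (fun i => x i = b) (by omega)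
    (couponCollectorTime n a c)
  rw [hcard, Fintype.card_fin] at this
  exact this.le

end FitnessLevels

section OneMax

variable {n : ℕ} (f : (Fin n → Bool) → ℝ) {B Bs : ℕ} {x₀ : Fin n → Bool}

theorem hitTime_moeasKernel_le_of_lt (hB : B < Bs) (hBs : Bs ≤ n) (hx₀ : ones x₀ = B) :
    hitTime (moeasKernel n f Bs (Bs - 1) true B Bs) (fun P => ∃ x ∈ P, ones x = Bs) {x₀} ≤
      couponCollectorTime n (n - Bs) (n - B) := by
  refine (hitTime_moeasKernel_le_couponCollectorTime f (b := false)
    (fun x => B ≤ ones x ∧ ones x < Bs) ?hgood ?hstay ?hfinish ?hadvance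
    ⟨hx₀.ge, hx₀ ▸ hB⟩).trans_eq (by rw [bitCount_false, hx₀])
  case hgood =>
    rintro x ⟨-, hx⟩
    rw [bitCount_false]
    omega
  case hstay =>
    rintro x i ⟨-, hx⟩ hxi
    have hy := bitCount_flipBit_add_one (b := true) (by simpa using hxi)
    simp only [← ones_eq_bitCount_true] at hy
    apply moeasUpdate_singleton_of_not_domS
    · simp only [incompS]; omega
    · exact not_domS_of_worse f (by simp only [if_true]; omega)
  case hfinish =>
    rintro x i ⟨-, hx⟩ hxi hlast
    have hy := bitCount_flipBit_of_ne (x := x) (i := i) (b := true) (by simp [hxi])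
    simp only [← ones_eq_bitCount_true] at hy
    rw [bitCount_false] at hlast
    have := ones_le x
    rw [moeasUpdate_singleton_of_incompS f (Or.inl ⟨by omega, by omega⟩)]
    exact ⟨flipBit x i, Finset.mem_insert_self _ _, by omega⟩
  case hadvance =>
    rintro x i ⟨hBx, hx⟩ hxi hmore
    have hy := bitCount_flipBit_of_ne (x := x) (i := i) (b := true) (by simp [hxi])
    simp only [← ones_eq_bitCount_true] at hy
    rw [bitCount_false] at hmore
    have := ones_le x
    refine ⟨moeasUpdate_singleton_of_domS f ?_ ?_ (by omega) (by omega), by omega, by omega⟩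
    · simp only [incompS]; omega
    · exact domS_of_better f (by simp only [inBracket]; omega) (by simp only [if_true]; omega)

theorem hitTime_moeasKernel_le_of_gt (hB : Bs < B) (hx₀ : ones x₀ = B) :
    hitTime (moeasKernel n f Bs (Bs + 1) false Bs B) (fun P => ∃ x ∈ P, ones x = Bs) {x₀} ≤
      couponCollectorTime n Bs B := by
  refine (hitTime_moeasKernel_le_couponCollectorTime f (b := true)
    (fun x => Bs < ones x ∧ ones x ≤ B) ?hgood ?hstay ?hfinish ?hadvance
    ⟨hx₀ ▸ hB, hx₀.le⟩).trans_eq (by rw [← ones_eq_bitCount_true, hx₀])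
  case hgood =>
    rintro x ⟨hx, -⟩
    exact ⟨hx, hx.ne'⟩
  case hstay =>
    rintro x i ⟨hx, -⟩ hxi
    have hy := bitCount_flipBit_of_ne hxi
    simp only [← ones_eq_bitCount_true] at hy
    apply moeasUpdate_singleton_of_not_domS
    · simp only [incompS]; omega
    · exact not_domS_of_worse f (by simp only [Bool.false_eq_true, if_false]; omega)
  case hfinish =>
    rintro x i ⟨hx, -⟩ hxi hlast
    have hy := bitCount_flipBit_add_one hxi
    simp only [← ones_eq_bitCount_true] at hy hlast
    rw [moeasUpdate_singleton_of_incompS f (Or.inl ⟨by omega, hlast⟩)]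
    exact ⟨flipBit x i, Finset.mem_insert_self _ _, by omega⟩
  case hadvance =>
    rintro x i ⟨hx, hxB⟩ hxi hmore
    have hy := bitCount_flipBit_add_one hxi
    simp only [← ones_eq_bitCount_true] at hy hmore
    refine ⟨moeasUpdate_singleton_of_domS f ?_ ?_ (by omega) (by omega), by omega, by omega⟩
    · simp only [incompS]; omega
    · exact domS_of_better f (by simp only [inBracket]; omega)
        (by simp only [Bool.false_eq_true, if_false]; omega)

end OneMax

/-- For OneMax under a dynamic uniform constraint changing from `B` to `B*`,
the MOEA-S (single-bit flips, population of size at most two), started with the population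
`{x₀}` where `x₀` is optimal for bound `B`, finds a solution with exactly `B*` ones in expected
time `O(n log((n−B)/(n−B*)))` if `B < B*` and `O(n log(B/B*))` if `B > B*`. -/
theorem stmt_3 :
    ∃ c : ℝ, 0 < c ∧ ∃ n₀ : ℕ, ∀ n : ℕ, n₀ ≤ n → ∀ B Bs : ℕ, B ≤ n → Bs ≤ n →
      ∀ x₀ : Fin n → Bool, ones x₀ = B →
        ((B < Bs → Bs < n →
          hitTime (moeasKernel n (fun x => (ones x : ℝ)) Bs (Bs - 1) true B Bs)
              (fun P => ∃ x ∈ P, ones x = Bs) {x₀} ≤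
            ENNReal.ofReal (c * n * Real.log (((n : ℝ) - B) / ((n : ℝ) - Bs)))) ∧
         (Bs < B → 1 ≤ Bs →
          hitTime (moeasKernel n (fun x => (ones x : ℝ)) Bs (Bs + 1) false Bs B)
              (fun P => ∃ x ∈ P, ones x = Bs) {x₀} ≤
            ENNReal.ofReal (c * n * Real.log ((B : ℝ) / (Bs : ℝ))))) := by
  refine ⟨1, one_pos, 0, fun n _ B Bs hBn hBsn x₀ hx₀ =>
    ⟨fun hB hBs_lt => ?_, fun hB hBs => ?_⟩⟩
  · calc _ ≤ couponCollectorTime n (n - Bs) (n - B) :=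
          hitTime_moeasKernel_le_of_lt _ hB hBsn hx₀
      _ ≤ ENNReal.ofReal (n * Real.log (((n - B : ℕ) : ℝ) / ((n - Bs : ℕ) : ℝ))) :=
          couponCollectorTime_le_log (by omega) (by omega)
      _ = _ := by rw [Nat.cast_sub hBn, Nat.cast_sub hBsn, one_mul]
  · calc _ ≤ couponCollectorTime n Bs B := hitTime_moeasKernel_le_of_gt _ hB hx₀
      _ ≤ _ := by rw [one_mul]; exact couponCollectorTime_le_log hBs hB.le
end
end

section
/- For maximizing a linear pseudo-Boolean function f(x) = Σ_{i=1}^n w_i x_i with positive weights under a dynamic uniform constraint with cardinality bound changing from B to B* and D = |B* − B|, the MOEA, starting from a solution that is optimal for bound B, has expected re-optimization time O(n·D²). -/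
open scoped ENNReal
open Classical

noncomputable section

/-- A linear pseudo-Boolean function `f(x) = Σ_i w_i x_i`. -/
def linF {n : ℕ} (w : Fin n → ℝ) (x : Fin n → Bool) : ℝ := ∑ i, if x i then w i else 0

/-- The maximum weight `w_max`. -/
def wmax {n : ℕ} (w : Fin n → ℝ) : ℝ := sSup (Set.range w)

/-- `x` is an optimal solution for the uniform constraint with cardinality bound `b`:
it is feasible and maximizes `f` among all feasible solutions. -/
def optForBound {n : ℕ} (w : Fin n → ℝ) (b : ℕ) (x : Fin n → Bool) : Prop :=
  ones x ≤ b ∧ ∀ y : Fin n → Bool, ones y ≤ b → linF w y ≤ linF w x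

/-- Dominance w.r.t. the vector-valued fitness `f_MOEA(x) = (|x|₁, f(x))`:
`y` dominates `z` iff they have the same number of ones and `f y ≥ f z`. -/
def dominates {n : ℕ} (f : (Fin n → Bool) → ℝ) (y z : Fin n → Bool) : Prop :=
  ones y = ones z ∧ f z ≤ f y

/-- Strict dominance: same number of ones and strictly larger `f`-value. -/
def strictlyDominates {n : ℕ} (f : (Fin n → Bool) → ℝ) (y z : Fin n → Bool) : Prop :=
  ones y = ones z ∧ f z < f y

/-- The MOEA population update: the offspring `y` enters the population `P` iff its number of
ones lies between the two bounds and no member of `P` dominates it; in that case all members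
strictly dominated by `y` are removed. -/
def moeaUpdate {n : ℕ} (f : (Fin n → Bool) → ℝ) (lo hi : ℕ)
    (P : Finset (Fin n → Bool)) (y : Fin n → Bool) : Finset (Fin n → Bool) :=
  if lo ≤ ones y ∧ ones y ≤ hi ∧ ¬∃ w ∈ P, dominates f w y then
    insert y (P.filter fun z => ¬strictlyDominates f y z)
  else P

/-- One iteration of the MOEA: a parent is chosen uniformly at random from the population,
an offspring is created by standard bit mutation, and the population is updated. -/
def moeaKernel (n : ℕ) (f : (Fin n → Bool) → ℝ) (lo hi : ℕ)
    (P Q : Finset (Fin n → Bool)) : ℝ≥0∞ :=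
  (P.card : ℝ≥0∞)⁻¹ *
    ∑ x ∈ P, ∑' y, if moeaUpdate f lo hi P y = Q then pmutEA n x y else 0

/-!
A *level optimum* maximizes `f` among the solutions with the same number of ones. Flipping the
heaviest zero-bit (lightest one-bit) of a level optimum gives a level optimum one level up (down).
Level optima are never strictly dominated, so the population never loses one, and the distance to
`B*` of the closest level optimum in the population never increases. It decreases as soon as that
level optimum is selected (probability `≥ 1/(D+1)`, as the population has one member per level in
`[min B B*, max B B*]`) and mutated by the right single flip (probability `≥ 1/(4n)`). Starting
from distance `D`, the fitness-level method bounds the expected time by `D · 4n(D+1) ≤ 8nD²`.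
-/

section BitStrings

variable {n : ℕ}

def oneBits (x : Fin n → Bool) : Finset (Fin n) := Finset.univ.filter fun i => x i = true

lemma ones_eq_card_oneBits (x : Fin n → Bool) : ones x = (oneBits x).card := rfl

@[simp]
lemma mem_oneBits {x : Fin n → Bool} {i : Fin n} : i ∈ oneBits x ↔ x i = true := by
  simp [oneBits]

lemma linF_eq_sum_oneBits (w : Fin n → ℝ) (x : Fin n → Bool) :
    linF w x = ∑ i ∈ oneBits x, w i := by
  rw [linF, oneBits, Finset.sum_filter]

lemma oneBits_update_true (x : Fin n → Bool) (i : Fin n) :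
    oneBits (Function.update x i true) = insert i (oneBits x) := by
  ext j; by_cases h : j = i <;> simp [Function.update, h]

lemma oneBits_update_false (x : Fin n → Bool) (i : Fin n) :
    oneBits (Function.update x i false) = (oneBits x).erase i := by
  ext j; by_cases h : j = i <;> simp [Function.update, h]

lemma ones_update_true {x : Fin n → Bool} {i : Fin n} (h : x i = false) :
    ones (Function.update x i true) = ones x + 1 := by
  rw [ones_eq_card_oneBits, ones_eq_card_oneBits, oneBits_update_true,
    Finset.card_insert_of_notMem (by simp [h])]

lemma ones_update_false {x : Fin n → Bool} {i : Fin n} (h : x i = true) :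
    ones (Function.update x i false) = ones x - 1 := by
  rw [ones_eq_card_oneBits, ones_eq_card_oneBits, oneBits_update_false,
    Finset.card_erase_of_mem (mem_oneBits.2 h)]

lemma linF_update_true (w : Fin n → ℝ) {x : Fin n → Bool} {i : Fin n} (h : x i = false) :
    linF w (Function.update x i true) = linF w x + w i := by
  rw [linF_eq_sum_oneBits, linF_eq_sum_oneBits, oneBits_update_true,
    Finset.sum_insert (by simp [h]), add_comm]

lemma linF_update_false (w : Fin n → ℝ) {x : Fin n → Bool} {i : Fin n} (h : x i = true) :
    linF w (Function.update x i false) = linF w x - w i := by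
  rw [linF_eq_sum_oneBits, linF_eq_sum_oneBits, oneBits_update_false,
    Finset.sum_erase_eq_sub (mem_oneBits.2 h)]

lemma hammingDist_update_of_ne {x : Fin n → Bool} {i : Fin n} {b : Bool} (h : x i ≠ b) :
    hammingDist x (Function.update x i b) = 1 := by
  rw [hammingDist, Finset.card_eq_one]
  refine ⟨i, Finset.ext fun j => ?_⟩
  by_cases hj : j = i <;> simp [Function.update, hj, h]

end BitStrings

section LevelOptimality

variable {n : ℕ} {w : Fin n → ℝ}

def IsLevelOpt (w : Fin n → ℝ) (x : Fin n → Bool) : Prop := optForBound w (ones x) x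

lemma ones_eq_of_optForBound (hw : ∀ i, 0 < w i) {b : ℕ} {x : Fin n → Bool} (hb : b ≤ n)
    (hx : optForBound w b x) : ones x = b := by
  refine hx.1.antisymm (not_lt.1 fun hlt => ?_)
  obtain ⟨i, -, hix⟩ : ∃ i ∈ Finset.univ, i ∉ oneBits x :=
    Finset.exists_mem_notMem_of_card_lt_card
      (by simpa [← ones_eq_card_oneBits] using hlt.trans_le hb)
  have hi : x i = false := by simpa using hix
  have := hx.2 _ ((ones_update_true hi).trans_le hlt)
  linarith [linF_update_true w hi, hw i]

lemma IsLevelOpt.of_optForBound (hw : ∀ i, 0 < w i) {b : ℕ} {x : Fin n → Bool} (hb : b ≤ n)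
    (hx : optForBound w b x) : IsLevelOpt w x := by
  rwa [IsLevelOpt, ones_eq_of_optForBound hw hb hx]

lemma IsLevelOpt.of_dominates {x y : Fin n → Bool} (hx : IsLevelOpt w x)
    (hyx : dominates (linF w) y x) : IsLevelOpt w y :=
  ⟨le_rfl, fun z hz => (hx.2 z (hz.trans_eq hyx.1)).trans hyx.2⟩

lemma IsLevelOpt.exists_flip_up (hw : ∀ i, 0 < w i) {x : Fin n → Bool} (hx : IsLevelOpt w x)
    (hlt : ones x < n) :
    ∃ y, hammingDist x y = 1 ∧ ones y = ones x + 1 ∧ IsLevelOpt w y := by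
  have hzeros : (oneBits x)ᶜ.Nonempty := by
    rw [← Finset.card_pos, Finset.card_compl, Fintype.card_fin, ← ones_eq_card_oneBits]
    omega
  obtain ⟨i, hi, himax⟩ := Finset.exists_max_image _ w hzeros
  have hxi : x i = false := by simpa using hi
  refine ⟨_, hammingDist_update_of_ne (by simp [hxi]), ones_update_true hxi, ?_⟩
  refine ⟨le_rfl, fun z hz => ?_⟩
  rw [linF_update_true w hxi]
  rw [ones_update_true hxi] at hz
  rcases hz.lt_or_eq with hz | hz
  · linarith [hx.2 z (Nat.lt_succ_iff.1 hz), hw i]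
  -- `z` has a one-bit `j` where `x` has a zero; dropping it lands on the level of `x`.
  obtain ⟨j, hjz, hjx⟩ := Finset.exists_mem_notMem_of_card_lt_card
    (s := oneBits x) (t := oneBits z)
    (by rw [← ones_eq_card_oneBits, ← ones_eq_card_oneBits]; omega)
  have hzj : z j = true := mem_oneBits.1 hjz
  have := hx.2 _ (by rw [ones_update_false hzj]; omega)
  linarith [linF_update_false w hzj, himax j (Finset.mem_compl.2 hjx)]

lemma IsLevelOpt.exists_flip_down {x : Fin n → Bool} (hx : IsLevelOpt w x) (hpos : 0 < ones x) :
    ∃ y, hammingDist x y = 1 ∧ ones y = ones x - 1 ∧ IsLevelOpt w y := by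
  have hones : (oneBits x).Nonempty := by rwa [← Finset.card_pos, ← ones_eq_card_oneBits]
  obtain ⟨i, hi, himin⟩ := Finset.exists_min_image _ w hones
  have hxi : x i = true := mem_oneBits.1 hi
  refine ⟨_, hammingDist_update_of_ne (by simp [hxi]), ones_update_false hxi, ?_⟩
  refine ⟨le_rfl, fun z hz => ?_⟩
  rw [linF_update_false w hxi]
  rw [ones_update_false hxi] at hz
  -- `x` has a one-bit `j` where `z` has a zero; adding it to `z` stays within the level of `x`.
  obtain ⟨j, hjx, hjz⟩ := Finset.exists_mem_notMem_of_card_lt_card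
    (s := oneBits z) (t := oneBits x)
    (by rw [← ones_eq_card_oneBits, ← ones_eq_card_oneBits]; omega)
  have hzj : z j = false := by simpa using hjz
  have := hx.2 _ (by rw [ones_update_true hzj]; omega)
  linarith [linF_update_true w hzj, himin j hjx]

lemma IsLevelOpt.exists_flip_toward (hw : ∀ i, 0 < w i) {x : Fin n → Bool} (hx : IsLevelOpt w x)
    {b : ℕ} (hb : b ≤ n) (hxb : ones x ≠ b) :
    ∃ y, hammingDist x y = 1 ∧ IsLevelOpt w y ∧ min (ones x) b ≤ ones y ∧
      ones y ≤ max (ones x) b ∧ Nat.dist (ones y) b + 1 = Nat.dist (ones x) b := by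
  rcases hxb.lt_or_gt with hlt | hgt
  · obtain ⟨y, hxy, hy, hyopt⟩ := hx.exists_flip_up hw (hlt.trans_le hb)
    exact ⟨y, hxy, hyopt, by simp only [Nat.dist] at *; omega⟩
  · obtain ⟨y, hxy, hy, hyopt⟩ := hx.exists_flip_down (by omega)
    exact ⟨y, hxy, hyopt, by simp only [Nat.dist] at *; omega⟩

end LevelOptimality

section Population

variable {n : ℕ} {w : Fin n → ℝ} {lo hi b : ℕ} {P : Finset (Fin n → Bool)}

structure PopInvariant (w : Fin n → ℝ) (lo hi : ℕ) (P : Finset (Fin n → Bool)) : Prop where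
  ones_mem_Icc : ∀ x ∈ P, ones x ∈ Finset.Icc lo hi
  injOn_ones : Set.InjOn ones (P : Set (Fin n → Bool))
  exists_levelOpt : ∃ x ∈ P, IsLevelOpt w x

/-- The potential of the fitness-level argument (`sInf ∅ = 0` if `P` holds no level optimum). -/
def optGap (w : Fin n → ℝ) (b : ℕ) (P : Finset (Fin n → Bool)) : ℕ :=
  sInf {d | ∃ x ∈ P, IsLevelOpt w x ∧ Nat.dist (ones x) b = d}

lemma optGap_le {x : Fin n → Bool} (hxP : x ∈ P) (hx : IsLevelOpt w x) :
    optGap w b P ≤ Nat.dist (ones x) b :=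
  Nat.sInf_le ⟨x, hxP, hx, rfl⟩

lemma PopInvariant.exists_optGap_eq (hP : PopInvariant w lo hi P) :
    ∃ x ∈ P, IsLevelOpt w x ∧ Nat.dist (ones x) b = optGap w b P := by
  obtain ⟨x, hxP, hx⟩ := hP.exists_levelOpt
  exact Nat.sInf_mem (s := {d | ∃ x ∈ P, IsLevelOpt w x ∧ Nat.dist (ones x) b = d})
    ⟨_, x, hxP, hx, rfl⟩

lemma PopInvariant.card_le (hP : PopInvariant w lo hi P) : P.card ≤ hi + 1 - lo := by
  simpa using Finset.card_le_card_of_injOn ones hP.ones_mem_Icc hP.injOn_ones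

lemma IsLevelOpt.mem_moeaUpdate {x : Fin n → Bool} (hx : IsLevelOpt w x) (hxP : x ∈ P)
    (y : Fin n → Bool) : x ∈ moeaUpdate (linF w) lo hi P y := by
  unfold moeaUpdate
  split_ifs
  · exact Finset.mem_insert_of_mem
      (Finset.mem_filter.2 ⟨hxP, fun hyx => (hx.2 y hyx.1.le).not_gt hyx.2⟩)
  · exact hxP

lemma popInvariant_moeaUpdate (hP : PopInvariant w lo hi P) (y : Fin n → Bool) :
    PopInvariant w lo hi (moeaUpdate (linF w) lo hi P y) := by
  obtain ⟨x, hxP, hx⟩ := hP.exists_levelOpt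
  have hxmem := hx.mem_moeaUpdate (lo := lo) (hi := hi) hxP y
  unfold moeaUpdate at hxmem ⊢
  split_ifs at hxmem ⊢ with hacc
  · obtain ⟨hlo, hhi, hnodom⟩ := hacc
    have hfresh : ∀ z ∈ P, ¬strictlyDominates (linF w) y z → ones z ≠ ones y := by
      intro z hzP hzy hzo
      exact hnodom ⟨z, hzP, hzo, not_lt.1 fun hlt => hzy ⟨hzo.symm, hlt⟩⟩
    refine ⟨?_, ?_, x, hxmem, hx⟩
    · simp only [Finset.mem_insert, Finset.mem_filter, forall_eq_or_imp]
      exact ⟨Finset.mem_Icc.2 ⟨hlo, hhi⟩, fun z hz => hP.ones_mem_Icc z hz.1⟩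
    · rw [Finset.coe_insert, Set.injOn_insert
        fun h => hnodom ⟨y, (Finset.mem_filter.1 (Finset.mem_coe.1 h)).1, rfl, le_rfl⟩,
        Finset.coe_filter]
      refine ⟨hP.injOn_ones.mono fun z hz => hz.1, ?_⟩
      rintro ⟨z, hz, hzo⟩
      exact hfresh z hz.1 hz.2 hzo
  · exact hP

lemma PopInvariant.optGap_moeaUpdate_le (hP : PopInvariant w lo hi P) (y : Fin n → Bool) :
    optGap w b (moeaUpdate (linF w) lo hi P y) ≤ optGap w b P := by
  obtain ⟨x, hxP, hx, hgap⟩ := hP.exists_optGap_eq (b := b)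
  exact hgap ▸ optGap_le (hx.mem_moeaUpdate hxP y) hx

lemma exists_levelOpt_mem_moeaUpdate {y : Fin n → Bool} (hy : IsLevelOpt w y)
    (hlo : lo ≤ ones y) (hhi : ones y ≤ hi) :
    ∃ z ∈ moeaUpdate (linF w) lo hi P y, IsLevelOpt w z ∧ ones z = ones y := by
  by_cases hdom : ∃ v ∈ P, dominates (linF w) v y
  · obtain ⟨v, hvP, hvy⟩ := hdom
    have hv := hy.of_dominates hvy
    exact ⟨v, hv.mem_moeaUpdate hvP y, hv, hvy.1⟩
  · refine ⟨y, ?_, hy, rfl⟩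
    rw [moeaUpdate, if_pos ⟨hlo, hhi, hdom⟩]
    exact Finset.mem_insert_self _ _

lemma PopInvariant.exists_flip_optGap_lt (hw : ∀ i, 0 < w i) (hP : PopInvariant w lo hi P)
    (hlob : lo ≤ b) (hbhi : b ≤ hi) (hbn : b ≤ n) (hP_opt : ¬∃ x ∈ P, optForBound w b x) :
    ∃ x ∈ P, ∃ y, hammingDist x y = 1 ∧
      optGap w b (moeaUpdate (linF w) lo hi P y) < optGap w b P := by
  obtain ⟨x, hxP, hx, hgap⟩ := hP.exists_optGap_eq (b := b)
  have hxb : ones x ≠ b := fun h => hP_opt ⟨x, hxP, h ▸ hx⟩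
  obtain ⟨y, hxy, hy, hymin, hymax, hydist⟩ := hx.exists_flip_toward hw hbn hxb
  have hxwin := Finset.mem_Icc.1 (hP.ones_mem_Icc x hxP)
  obtain ⟨z, hzP, hz, hzy⟩ := exists_levelOpt_mem_moeaUpdate (P := P) (lo := lo) (hi := hi)
    hy (by omega) (by omega)
  refine ⟨x, hxP, y, hxy, ?_⟩
  have := optGap_le (b := b) hzP hz
  rw [hzy] at this
  omega

end Population

section Mutation

variable {n : ℕ}

lemma pmutEA_eq_prod (x y : Fin n → Bool) :
    pmutEA n x y = ∏ i, if x i = y i then 1 - (n : ℝ≥0∞)⁻¹ else (n : ℝ≥0∞)⁻¹ := by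
  rw [Finset.prod_ite, Finset.prod_const, Finset.prod_const, pmutEA, hammingDist, mul_comm]
  congr 2
  have := Finset.card_filter_add_card_filter_not (s := Finset.univ) (fun i => x i = y i)
  rw [Finset.card_univ, Fintype.card_fin] at this
  simp only [ne_eq]
  omega

lemma sum_pmutEA (hn : 1 ≤ n) (x : Fin n → Bool) : ∑ y, pmutEA n x y = 1 := by
  have hcoin : ∀ i, ∑ b, (if x i = b then 1 - (n : ℝ≥0∞)⁻¹ else (n : ℝ≥0∞)⁻¹) = 1 := by
    intro i
    have : (n : ℝ≥0∞)⁻¹ ≤ 1 := ENNReal.inv_le_one.2 (by exact_mod_cast hn)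
    rw [Fintype.sum_bool]
    cases x i
    · simpa using add_tsub_cancel_of_le this
    · simpa using tsub_add_cancel_of_le this
  simp only [pmutEA_eq_prod]
  rw [← Fintype.prod_sum (fun i b => if x i = b then 1 - (n : ℝ≥0∞)⁻¹ else (n : ℝ≥0∞)⁻¹)]
  simp only [hcoin, Finset.prod_const_one]

/-- `(1 - 1/(m+1))^m = (1 + 1/m)^(-m) ≥ 1/e`. -/
lemma inv_four_le_one_sub_inv_pow (m : ℕ) : (4 : ℝ)⁻¹ ≤ (1 - ((m + 1 : ℕ) : ℝ)⁻¹) ^ m := by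
  rcases Nat.eq_zero_or_pos m with rfl | hm
  · norm_num
  have hbase : 1 - ((m + 1 : ℕ) : ℝ)⁻¹ = (1 + (m : ℝ)⁻¹)⁻¹ := by
    push_cast
    field_simp
    ring
  rw [hbase, inv_pow]
  gcongr
  exact Real.one_add_inv_pow_le_exp.trans (Real.exp_one_lt_d9.le.trans (by norm_num))

lemma inv_four_le_one_sub_inv_pow_ennreal (hn : 1 ≤ n) :
    (4 : ℝ≥0∞)⁻¹ ≤ (1 - (n : ℝ≥0∞)⁻¹) ^ (n - 1) := by
  obtain ⟨m, rfl⟩ := Nat.exists_eq_add_of_le' hn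
  have hcast : 1 - ((m + 1 : ℕ) : ℝ≥0∞)⁻¹ = ENNReal.ofReal (1 - ((m + 1 : ℕ) : ℝ)⁻¹) := by
    rw [ENNReal.ofReal_sub _ (by positivity), ENNReal.ofReal_one,
      ENNReal.ofReal_inv_of_pos (by positivity), ENNReal.ofReal_natCast]
  have hbase : (0 : ℝ) ≤ 1 - ((m + 1 : ℕ) : ℝ)⁻¹ :=
    sub_nonneg.2 (inv_le_one_of_one_le₀ (by simp))
  calc (4 : ℝ≥0∞)⁻¹ = ENNReal.ofReal 4⁻¹ := by
        rw [ENNReal.ofReal_inv_of_pos (by norm_num), ENNReal.ofReal_ofNat]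
    _ ≤ ENNReal.ofReal ((1 - ((m + 1 : ℕ) : ℝ)⁻¹) ^ m) :=
        ENNReal.ofReal_le_ofReal (inv_four_le_one_sub_inv_pow m)
    _ = (1 - ((m + 1 : ℕ) : ℝ≥0∞)⁻¹) ^ (m + 1 - 1) := by
        rw [ENNReal.ofReal_pow hbase, hcast, Nat.add_sub_cancel]

lemma inv_mul_inv_four_le_pmutEA (hn : 1 ≤ n) {x y : Fin n → Bool} (hxy : hammingDist x y = 1) :
    (n : ℝ≥0∞)⁻¹ * 4⁻¹ ≤ pmutEA n x y := by
  rw [pmutEA, hxy, pow_one]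
  gcongr
  exact inv_four_le_one_sub_inv_pow_ennreal hn

end Mutation

section Kernel

variable {n : ℕ} {f : (Fin n → Bool) → ℝ} {lo hi : ℕ} {P : Finset (Fin n → Bool)}

lemma tsum_moeaKernel (hn : 1 ≤ n) (hP : P.Nonempty) :
    ∑' Q, moeaKernel n f lo hi P Q = 1 := by
  simp only [moeaKernel, tsum_fintype, ← Finset.mul_sum]
  rw [Finset.sum_comm]
  have hparent : ∀ x ∈ P,
      ∑ Q, ∑ y, (if moeaUpdate f lo hi P y = Q then pmutEA n x y else 0) = 1 := by
    intro x _
    rw [Finset.sum_comm]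
    simp only [Finset.sum_ite_eq, Finset.mem_univ, if_true]
    exact sum_pmutEA hn x
  rw [Finset.sum_congr rfl hparent, Finset.sum_const, nsmul_one]
  exact ENNReal.inv_mul_cancel (by simpa using hP.ne_empty) (by simp)

lemma exists_moeaUpdate_eq_of_moeaKernel_ne_zero {Q : Finset (Fin n → Bool)}
    (h : moeaKernel n f lo hi P Q ≠ 0) : ∃ y, moeaUpdate f lo hi P y = Q := by
  contrapose! h
  simp [moeaKernel, h]

lemma inv_card_mul_pmutEA_le_moeaKernel {x : Fin n → Bool} (hx : x ∈ P) (y : Fin n → Bool) :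
    (P.card : ℝ≥0∞)⁻¹ * pmutEA n x y ≤ moeaKernel n f lo hi P (moeaUpdate f lo hi P y) := by
  refine mul_le_mul_right ?_ _
  refine le_trans ?_ (Finset.single_le_sum (fun _ _ => zero_le) hx)
  simpa using ENNReal.le_tsum (f := fun z =>
    if moeaUpdate f lo hi P z = moeaUpdate f lo hi P y then pmutEA n x z else 0) y

end Kernel

section FitnessLevels

variable {S : Type*} {K : S → S → ℝ≥0∞} {A : S → Prop}

lemma survive_of_target {x : S} (hx : A x) (t : ℕ) : survive K A t x = 0 := by
  cases t <;> simp [survive, hx]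

lemma survive_succ_of_not_target {x : S} (hx : ¬A x) (t : ℕ) :
    survive K A (t + 1) x = ∑' y, K x y * survive K A t y := by
  simp [survive, hx]

variable {G : S → Prop} {L : S → ℕ} {p : ℝ≥0∞}

lemma add_tsum_mul_level_le {x : S} (hmass : ∑' y, K x y ≤ 1)
    (hstep : ∀ y, K x y ≠ 0 → L y ≤ L x)
    (hprog : p ≤ ∑' y, if L y < L x then K x y else 0) :
    p + ∑' y, K x y * L y ≤ L x := by
  have hterm : ∀ y, (if L y < L x then K x y else 0) + K x y * L y ≤ K x y * L x := by
    intro y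
    by_cases hK : K x y = 0
    · simp [hK]
    have hle := hstep y hK
    split_ifs with hlt
    · calc K x y + K x y * L y = K x y * ((L y + 1 : ℕ) : ℝ≥0∞) := by push_cast; ring
        _ ≤ K x y * L x := by gcongr; exact hlt
    · simpa using mul_le_mul_right (Nat.cast_le.2 hle) (K x y)
  calc p + ∑' y, K x y * L y
      ≤ ∑' y, ((if L y < L x then K x y else 0) + K x y * L y) := by
        rw [ENNReal.tsum_add]; gcongr
    _ ≤ ∑' y, K x y * L x := ENNReal.tsum_le_tsum hterm
    _ = (∑' y, K x y) * L x := ENNReal.tsum_mul_right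
    _ ≤ L x := by simpa using mul_le_mul_left hmass (L x : ℝ≥0∞)

theorem hitTime_le_level_div (hp : p ≠ 0) (hp' : p ≠ ∞) (hmass : ∀ x, G x → ¬A x → ∑' y, K x y ≤ 1)
    (hstep : ∀ x, G x → ¬A x → ∀ y, K x y ≠ 0 → G y ∧ L y ≤ L x)
    (hprog : ∀ x, G x → ¬A x → p ≤ ∑' y, if L y < L x then K x y else 0)
    {x : S} (hx : G x) : hitTime K A x ≤ L x / p := by
  suffices h : ∀ t x, G x → ∑ s ∈ Finset.range t, survive K A s x ≤ L x / p from
    ENNReal.tsum_le_of_sum_range_le (h · x hx)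
  intro t
  induction t with
  | zero => simp
  | succ t ih =>
    intro x hG
    by_cases hA : A x
    · simp [survive_of_target hA]
    have h0 : survive K A 0 x = 1 := by simp [survive, hA]
    simp only [Finset.sum_range_succ', survive_succ_of_not_target hA, h0]
    calc ∑ s ∈ Finset.range t, ∑' y, K x y * survive K A s y + 1
        = ∑' y, K x y * ∑ s ∈ Finset.range t, survive K A s y + 1 := by
          simp only [Finset.mul_sum]
          rw [Summable.tsum_finsetSum fun _ _ => ENNReal.summable]
      _ ≤ ∑' y, K x y * (L y * p⁻¹) + 1 := by
          gcongr ?_ + 1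
          refine ENNReal.tsum_le_tsum fun y => ?_
          by_cases hK : K x y = 0
          · simp [hK]
          · exact mul_le_mul_right (ih y (hstep x hG hA y hK).1) _
      _ = (p + ∑' y, K x y * L y) * p⁻¹ := by
          simp only [← mul_assoc, ENNReal.tsum_mul_right, add_mul, ENNReal.mul_inv_cancel hp hp',
            add_comm]
      _ ≤ L x / p := mul_le_mul_left (add_tsum_mul_level_le (hmass x hG hA)
          (fun y hK => (hstep x hG hA y hK).2) (hprog x hG hA)) _

end FitnessLevels

section Reoptimization

variable {n : ℕ} {w : Fin n → ℝ} {lo hi b : ℕ} {P : Finset (Fin n → Bool)}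

lemma PopInvariant.inv_le_tsum_optGap_lt (hn : 1 ≤ n) (hw : ∀ i, 0 < w i)
    (hP : PopInvariant w lo hi P) (hlob : lo ≤ b) (hbhi : b ≤ hi) (hbn : b ≤ n)
    (hP_opt : ¬∃ x ∈ P, optForBound w b x) :
    (((hi + 1 - lo) * (4 * n) : ℕ) : ℝ≥0∞)⁻¹ ≤
      ∑' Q, if optGap w b Q < optGap w b P then moeaKernel n (linF w) lo hi P Q else 0 := by
  obtain ⟨x, hxP, y, hxy, hlt⟩ := hP.exists_flip_optGap_lt hw hlob hbhi hbn hP_opt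
  calc (((hi + 1 - lo) * (4 * n) : ℕ) : ℝ≥0∞)⁻¹
      = ((hi + 1 - lo : ℕ) : ℝ≥0∞)⁻¹ * ((n : ℝ≥0∞)⁻¹ * 4⁻¹) := by
        rw [Nat.cast_mul, ENNReal.mul_inv (.inr (ENNReal.natCast_ne_top _))
          (.inl (ENNReal.natCast_ne_top _)), Nat.cast_mul, Nat.cast_ofNat,
          ENNReal.mul_inv (.inr (ENNReal.natCast_ne_top _)) (.inl ENNReal.ofNat_ne_top),
          mul_comm (4⁻¹ : ℝ≥0∞)]
    _ ≤ (P.card : ℝ≥0∞)⁻¹ * pmutEA n x y :=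
        mul_le_mul' (ENNReal.inv_le_inv.2 (Nat.cast_le.2 hP.card_le))
          (inv_mul_inv_four_le_pmutEA hn hxy)
    _ ≤ moeaKernel n (linF w) lo hi P (moeaUpdate (linF w) lo hi P y) :=
        inv_card_mul_pmutEA_le_moeaKernel hxP y
    _ ≤ _ := by
        simpa [hlt] using ENNReal.le_tsum (f := fun Q =>
          if optGap w b Q < optGap w b P then moeaKernel n (linF w) lo hi P Q else 0)
          (moeaUpdate (linF w) lo hi P y)

theorem hitTime_moeaKernel_le (hn : 1 ≤ n) (hw : ∀ i, 0 < w i) (hlob : lo ≤ b) (hbhi : b ≤ hi)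
    (hbn : b ≤ n) (hP : PopInvariant w lo hi P) :
    hitTime (moeaKernel n (linF w) lo hi) (fun P => ∃ x ∈ P, optForBound w b x) P ≤
      (optGap w b P * ((hi + 1 - lo) * (4 * n)) : ℕ) := by
  have hwidth : (hi + 1 - lo) * (4 * n) ≠ 0 := Nat.mul_ne_zero (by omega) (by omega)
  refine (hitTime_le_level_div (G := PopInvariant w lo hi)
    (ENNReal.inv_ne_zero.2 (ENNReal.natCast_ne_top _))
    (ENNReal.inv_ne_top.2 (by exact_mod_cast hwidth))
    (fun Q hQ _ => ?_) (fun Q hQ _ R hR => ?_)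
    (fun Q hQ hQ_opt => hQ.inv_le_tsum_optGap_lt hn hw hlob hbhi hbn hQ_opt) hP).trans_eq ?_
  · obtain ⟨x, hxQ, -⟩ := hQ.exists_levelOpt
    exact (tsum_moeaKernel hn ⟨x, hxQ⟩).le
  · obtain ⟨y, rfl⟩ := exists_moeaUpdate_eq_of_moeaKernel_ne_zero hR
    exact ⟨popInvariant_moeaUpdate hQ y, hQ.optGap_moeaUpdate_le y⟩
  · rw [div_eq_mul_inv, inv_inv, ← Nat.cast_mul]

end Reoptimization

/-- For maximizing a linear function with positive weights under a dynamic
uniform constraint changing from `B` to `B*` (`D = |B*−B|`), the MOEA started with the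
population `{x₀}` where `x₀` is optimal for bound `B` finds a solution optimal for bound `B*`
in expected time `O(n·D²)`. -/
theorem stmt_6 :
    ∃ c : ℝ, 0 < c ∧ ∃ n₀ : ℕ, ∀ n : ℕ, n₀ ≤ n → ∀ w : Fin n → ℝ, (∀ i, 0 < w i) →
      ∀ B Bs : ℕ, B ≤ n → Bs ≤ n →
        ∀ x₀ : Fin n → Bool, optForBound w B x₀ →
          hitTime (moeaKernel n (linF w) (min B Bs) (max B Bs))
              (fun P => ∃ x ∈ P, optForBound w Bs x) {x₀} ≤
            ENNReal.ofReal (c * n * (Nat.dist B Bs : ℝ) ^ 2) := by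
  refine ⟨8, by norm_num, 1, fun n hn w hw B Bs hB hBs x₀ hx₀ => ?_⟩
  have hones : ones x₀ = B := ones_eq_of_optForBound hw hB hx₀
  have hx₀opt : IsLevelOpt w x₀ := .of_optForBound hw hB hx₀
  have hP₀ : PopInvariant w (min B Bs) (max B Bs) {x₀} :=
    ⟨by simp [hones], by simp, x₀, Finset.mem_singleton_self x₀, hx₀opt⟩
  have hgap : optGap w Bs {x₀} ≤ Nat.dist B Bs :=
    hones ▸ optGap_le (Finset.mem_singleton_self x₀) hx₀opt
  have hwidth : max B Bs + 1 - min B Bs = Nat.dist B Bs + 1 := by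
    simp only [Nat.dist]; omega
  refine (hitTime_moeaKernel_le hn hw (min_le_right B Bs) (le_max_right B Bs) hBs hP₀).trans ?_
  rw [← ENNReal.ofReal_natCast, hwidth]
  refine ENNReal.ofReal_le_ofReal ?_
  have hcount : optGap w Bs {x₀} * ((Nat.dist B Bs + 1) * (4 * n)) ≤ 8 * n * Nat.dist B Bs ^ 2 := by
    calc _ ≤ Nat.dist B Bs * ((Nat.dist B Bs + 1) * (4 * n)) := by gcongr
      _ ≤ 8 * n * Nat.dist B Bs ^ 2 := by nlinarith [Nat.le_self_pow two_ne_zero (Nat.dist B Bs)]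
  exact_mod_cast hcount

end
end
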